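/- arXiv:1504.07553 — 5 statements merged into one kernel-verified Lean document; each statement's English description precedes it below -/
import Mathlib

section
/- (Composition) If M₁ : Xⁿ → R₁ is (ε₁, δ₁)-differentially private and M₂ : Xⁿ × R₁ → R₂ is (ε₂, δ₂)-differentially private in its first argument for every fixed value of its second argument, then the composed mechanism M(D) = M₂(D, M₁(D)) is (ε₁ + ε₂, δ₁ + δ₂)-differentially private. -/
/-!
Write `Pr[M(D) ∈ T] = ∑ y₁, M₁ D y₁ * f y₁` with `f y₁ = Pr[M₂(D, y₁) ∈ T]`, and `g` likewise
for `D'`. Since `f ≤ 1` and `f ≤ e^ε₂ g + δ₂`, we have `f ≤ h + δ₂` with `h = min 1 (e^ε₂ g)`.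
The event-wise guarantee of `M₁` extends to `[0, 1]`-valued test functions such as `h`, so
`∑ M₁ D * h ≤ e^ε₁ ∑ M₁ D' * h + δ₁ ≤ e^ε₁ e^ε₂ ∑ M₁ D' * g + δ₁`.
-/

open Real Set

section

variable {R : Type*}

lemma Summable.mul_of_mem_Icc {p u : R → ℝ} (hp : Summable p) (hu : ∀ y, u y ∈ Icc (0 : ℝ) 1) :
    Summable fun y => p y * u y :=
  hp.abs.of_norm_bounded fun y => by
    rw [Real.norm_eq_abs, abs_mul, abs_of_nonneg (hu y).1]
    exact mul_le_of_le_one_right (abs_nonneg _) (hu y).2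

lemma HasSum.tsum_subtype_mem_Icc {p : R → ℝ} (hp0 : ∀ y, 0 ≤ p y) (hp : HasSum p 1)
    (S : Set R) : ∑' y : S, p y ∈ Icc (0 : ℝ) 1 :=
  ⟨tsum_nonneg fun y => hp0 y, hp.tsum_eq ▸ hp.summable.tsum_subtype_le p S hp0⟩

lemma tsum_mul_le_tsum_subtype_pos {r u : R → ℝ} (hr : Summable r)
    (hu : ∀ y, u y ∈ Icc (0 : ℝ) 1) : ∑' y, r y * u y ≤ ∑' y : {y | 0 < r y}, r y := by
  rw [tsum_subtype]
  refine (hr.mul_of_mem_Icc hu).tsum_le_tsum (fun y => ?_) (hr.indicator _)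
  simp only [indicator_apply, mem_ofPred_eq]
  split_ifs with hy
  · exact mul_le_of_le_one_right hy.le (hu y).2
  · exact mul_nonpos_of_nonpos_of_nonneg (not_lt.1 hy) (hu y).1

lemma HasSum.tsum_mul_le_tsum_mul_add {p u v : R → ℝ} {δ : ℝ} (hp0 : ∀ y, 0 ≤ p y)
    (hp : HasSum p 1) (hu : ∀ y, u y ∈ Icc (0 : ℝ) 1) (hv : ∀ y, v y ∈ Icc (0 : ℝ) 1)
    (huv : ∀ y, u y ≤ v y + δ) : ∑' y, p y * u y ≤ ∑' y, p y * v y + δ :=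
  calc ∑' y, p y * u y ≤ ∑' y, (p y * v y + p y * δ) := by
        refine (hp.summable.mul_of_mem_Icc hu).tsum_le_tsum (fun y => ?_)
          ((hp.summable.mul_of_mem_Icc hv).add (hp.summable.mul_right δ))
        rw [← mul_add]
        exact mul_le_mul_of_nonneg_left (huv y) (hp0 y)
    _ = ∑' y, p y * v y + δ := by
        rw [(hp.summable.mul_of_mem_Icc hv).tsum_add (hp.summable.mul_right δ), tsum_mul_right,
          hp.tsum_eq, one_mul]

lemma tsum_mul_le_mul_tsum_mul {p u v : R → ℝ} {c : ℝ} (hp0 : ∀ y, 0 ≤ p y) (hp : Summable p)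
    (hu : ∀ y, u y ∈ Icc (0 : ℝ) 1) (hv : ∀ y, v y ∈ Icc (0 : ℝ) 1) (huv : ∀ y, u y ≤ c * v y) :
    ∑' y, p y * u y ≤ c * ∑' y, p y * v y := by
  rw [← tsum_mul_left]
  refine (hp.mul_of_mem_Icc hu).tsum_le_tsum (fun y => ?_) ((hp.mul_of_mem_Icc hv).mul_left c)
  rw [mul_left_comm]
  exact mul_le_mul_of_nonneg_left (huv y) (hp0 y)

/-- The worst `[0, 1]`-valued test function is the indicator of the event `{p > c q}`. -/
lemma tsum_mul_le_of_forall_tsum_subtype_le {p q u : R → ℝ} {c δ : ℝ} (hp : Summable p)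
    (hq : Summable q) (hpq : ∀ S : Set R, ∑' y : S, p y ≤ c * ∑' y : S, q y + δ)
    (hu : ∀ y, u y ∈ Icc (0 : ℝ) 1) : ∑' y, p y * u y ≤ c * ∑' y, q y * u y + δ := by
  have hle := tsum_mul_le_tsum_subtype_pos (hp.sub (hq.mul_left c)) hu
  have hS (S : Set R) : ∑' y : S, (p y - c * q y) = ∑' y : S, p y - c * ∑' y : S, q y := by
    rw [← tsum_mul_left]
    exact (hp.subtype S).tsum_sub ((hq.subtype S).mul_left c)
  have hR : ∑' y, (p y - c * q y) * u y = ∑' y, p y * u y - c * ∑' y, q y * u y := by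
    simp_rw [sub_mul, mul_assoc, ← tsum_mul_left]
    exact (hp.mul_of_mem_Icc hu).tsum_sub ((hq.mul_of_mem_Icc hu).mul_left c)
  rw [hS, hR] at hle
  linarith [hpq {y | 0 < p y - c * q y}]

lemma tsum_tsum_mul_comm_of_tsum_mem_Icc {R' : Type*} {p : R → ℝ} {K : R → R' → ℝ}
    (hp0 : ∀ y, 0 ≤ p y) (hp : Summable p) (hK0 : ∀ y z, 0 ≤ K y z) (hK : ∀ y, Summable (K y))
    (hK1 : ∀ y, ∑' z, K y z ∈ Icc (0 : ℝ) 1) :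
    ∑' z, ∑' y, p y * K y z = ∑' y, p y * ∑' z, K y z := by
  have hprod : Summable fun yz : R × R' => p yz.1 * K yz.1 yz.2 := by
    refine (summable_prod_of_nonneg fun yz => mul_nonneg (hp0 _) (hK0 _ _)).2
      ⟨fun y => (hK y).mul_left (p y), ?_⟩
    simpa only [tsum_mul_left] using hp.mul_of_mem_Icc hK1
  rw [Summable.tsum_comm hprod]
  exact tsum_congr fun y => tsum_mul_left

end

/-- Composition: if M₁ is (ε₁,δ₁)-DP and M₂(·, y₁) is (ε₂,δ₂)-DP for every fixed y₁,
then D ↦ M₂(D, M₁(D)) is (ε₁+ε₂, δ₁+δ₂)-DP. Mechanisms are given by their probability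
mass functions; `∑' y : T, M D y` is Pr[M(D) ∈ T]. -/
theorem dp_composition {X R1 R2 : Type*} (n : ℕ) (ε1 ε2 δ1 δ2 : ℝ)
    (M1 : (Fin n → X) → R1 → ℝ) (M2 : (Fin n → X) → R1 → R2 → ℝ)
    (hM1pos : ∀ D y1, 0 ≤ M1 D y1) (hM1sum : ∀ D, HasSum (M1 D) 1)
    (hM2pos : ∀ D y1 y2, 0 ≤ M2 D y1 y2) (hM2sum : ∀ D y1, HasSum (M2 D y1) 1)
    (hdp1 : ∀ D D' : Fin n → X, (∃ i, ∀ j, j ≠ i → D j = D' j) →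
      ∀ T : Set R1, ∑' y : T, M1 D y ≤ Real.exp ε1 * ∑' y : T, M1 D' y + δ1)
    (hdp2 : ∀ y1 : R1, ∀ D D' : Fin n → X, (∃ i, ∀ j, j ≠ i → D j = D' j) →
      ∀ T : Set R2, ∑' y : T, M2 D y1 y ≤ Real.exp ε2 * ∑' y : T, M2 D' y1 y + δ2) :
    ∀ D D' : Fin n → X, (∃ i, ∀ j, j ≠ i → D j = D' j) →
      ∀ T : Set R2,
        ∑' y2 : T, (∑' y1, M1 D y1 * M2 D y1 y2) ≤
          Real.exp (ε1 + ε2) * ∑' y2 : T, (∑' y1, M1 D' y1 * M2 D' y1 y2) + (δ1 + δ2) := by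
  intro D D' hadj T
  have hevent : ∀ D y1, ∑' y2 : T, M2 D y1 y2 ∈ Icc (0 : ℝ) 1 := fun D y1 =>
    (hM2sum D y1).tsum_subtype_mem_Icc (hM2pos D y1) T
  have hswap : ∀ D, ∑' y2 : T, ∑' y1, M1 D y1 * M2 D y1 y2
      = ∑' y1, M1 D y1 * ∑' y2 : T, M2 D y1 y2 := fun D =>
    tsum_tsum_mul_comm_of_tsum_mem_Icc (hM1pos D) (hM1sum D).summable (fun y1 y2 => hM2pos D y1 y2)
      (fun y1 => (hM2sum D y1).summable.subtype T) (hevent D)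
  rw [hswap D, hswap D']
  set f := fun y1 => ∑' y2 : T, M2 D y1 y2
  set g := fun y1 => ∑' y2 : T, M2 D' y1 y2
  set h := fun y1 => min 1 (exp ε2 * g y1)
  have hh : ∀ y1, h y1 ∈ Icc (0 : ℝ) 1 := fun y1 =>
    ⟨le_min zero_le_one (mul_nonneg (exp_pos _).le (hevent D' y1).1), min_le_left _ _⟩
  have hfh : ∀ y1, f y1 ≤ h y1 + δ2 := fun y1 => by
    have hδ2 : 0 ≤ δ2 := by simpa using hdp2 y1 D D' hadj ∅
    rw [← min_add_add_right]
    exact le_min (by linarith [(hevent D y1).2]) (hdp2 y1 D D' hadj T)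
  calc ∑' y1, M1 D y1 * f y1 ≤ ∑' y1, M1 D y1 * h y1 + δ2 :=
        (hM1sum D).tsum_mul_le_tsum_mul_add (hM1pos D) (hevent D) hh hfh
    _ ≤ exp ε1 * ∑' y1, M1 D' y1 * h y1 + δ1 + δ2 := by
        gcongr
        exact tsum_mul_le_of_forall_tsum_subtype_le (hM1sum D).summable (hM1sum D').summable
          (hdp1 D D' hadj) hh
    _ ≤ exp ε1 * (exp ε2 * ∑' y1, M1 D' y1 * g y1) + δ1 + δ2 := by
        gcongr
        exact tsum_mul_le_mul_tsum_mul (hM1pos D') (hM1sum D').summable hh (hevent D')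
          fun y1 => min_le_right _ _
    _ = exp (ε1 + ε2) * ∑' y1, M1 D' y1 * g y1 + (δ1 + δ2) := by
        rw [exp_add]
        ring
end

section
/- For all 0 < ε ≤ 1 and integers n ≥ 2m ≥ 2: ln((1 + (e^ε − 1)/n) / (1 + (e^{−ε} − 1)/n)) · m ≤ 6εm/n. -/
/-!
Write the ratio as `A / B` with `A = 1 + (e^ε - 1)/n ≥ 1` and `B = 1 + (e^{-ε} - 1)/n ∈ [1/2, 1]`.
Then `log A ≤ A - 1` and `-log B ≤ 1/B - 1 ≤ 2 (1 - B)`, while `|e^x - 1| ≤ 2|x|` on `[-1, 1]`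
bounds both `e^ε - 1` and `1 - e^{-ε}` by `2ε`; this gives `log (A / B) ≤ (2ε + 4ε)/n`.
-/

open Real

lemma neg_log_le_two_mul_one_sub {x : ℝ} (hx₀ : 1 / 2 ≤ x) (hx₁ : x ≤ 1) :
    -log x ≤ 2 * (1 - x) := by
  have hx : 0 < x := by linarith
  calc -log x ≤ x⁻¹ - 1 := by linarith [one_sub_inv_le_log_of_pos hx]
    _ = (1 - x) / x := by field_simp
    _ ≤ (1 - x) / (1 / 2) := by gcongr
    _ = 2 * (1 - x) := by ring

lemma log_div_one_add_div_le {a c n : ℝ} (hn : 2 ≤ n) (ha : 0 ≤ a) (hc₀ : -1 ≤ c) (hc₁ : c ≤ 0) :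
    log ((1 + a / n) / (1 + c / n)) ≤ (a - 2 * c) / n := by
  have hn₀ : 0 < n := by linarith
  have hcn₀ : -(1 / 2) ≤ c / n := by
    rw [le_div_iff₀ hn₀]; nlinarith
  have hcn₁ : c / n ≤ 0 := div_nonpos_of_nonpos_of_nonneg hc₁ hn₀.le
  have hA : 0 < 1 + a / n := by positivity
  have hB : 0 < 1 + c / n := by linarith
  have hlogA : log (1 + a / n) ≤ a / n := by linarith [log_le_sub_one_of_pos hA]
  have hlogB := neg_log_le_two_mul_one_sub (x := 1 + c / n) (by linarith) (by linarith)
  rw [log_div hA.ne' hB.ne', sub_div, mul_div_assoc]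
  linarith

lemma exp_sub_one_le_two_mul_abs {x : ℝ} (hx : |x| ≤ 1) : exp x - 1 ≤ 2 * |x| :=
  (le_abs_self _).trans (abs_exp_sub_one_le hx)

lemma one_sub_exp_le_two_mul_abs {x : ℝ} (hx : |x| ≤ 1) : 1 - exp x ≤ 2 * |x| := by
  rw [← neg_sub]
  exact (neg_le_abs _).trans (abs_exp_sub_one_le hx)

/-- Privacy amplification by subsampling, effective epsilon:
for 0 < ε ≤ 1 and n ≥ 2m ≥ 2,
m·ln((1 + (e^ε − 1)/n)/(1 + (e^{−ε} − 1)/n)) ≤ 6εm/n. -/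
theorem subsample_epsilon_bound (ε : ℝ) (hε0 : 0 < ε) (hε1 : ε ≤ 1)
    (m n : ℕ) (hm : 1 ≤ m) (hn : 2 * m ≤ n) :
    Real.log ((1 + (Real.exp ε - 1) / n) / (1 + (Real.exp (-ε) - 1) / n)) * m ≤
      6 * ε * m / n := by
  have hn₂ : (2 : ℝ) ≤ n := by exact_mod_cast (show 2 ≤ n by omega)
  have habs : |ε| ≤ 1 := by rwa [abs_of_pos hε0]
  have hup : exp ε - 1 ≤ 2 * ε := by
    simpa [abs_of_pos hε0] using exp_sub_one_le_two_mul_abs habs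
  have hdown : 1 - exp (-ε) ≤ 2 * ε := by
    simpa [abs_of_pos hε0] using one_sub_exp_le_two_mul_abs (x := -ε) (by rwa [abs_neg])
  have hlog := log_div_one_add_div_le hn₂ (sub_nonneg.2 (one_le_exp hε0.le))
    (by linarith [exp_pos (-ε)]) (sub_nonpos.2 (exp_le_one_iff.2 (by linarith)))
  have hsum : (exp ε - 1 - 2 * (exp (-ε) - 1)) / n ≤ 6 * ε / n := by
    gcongr; linarith
  calc _ ≤ 6 * ε / n * m := by gcongr; exact hlog.trans hsum
    _ = 6 * ε * m / n := by ring
end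

section
/- (Impossibility of pure-private learning of points with a countable hypothesis class, key claim) Let X be an infinite set and B a finite set of functions h : X → {0,1}. Then there exist distinct x, x' ∈ X such that every h ∈ B with h(x) = 1 also satisfies h(x') = 1. Consequently, for the point function c_x (c_x(y)=1 iff y=x) and the uniform distribution D on {x, x'}, every h ∈ B satisfies Pr_{y∼D}[c_x(y) = h(y)] ≤ 1/2. -/
/-! Finitely many functions into a finite type induce a map from the infinite set `X` to a finite
set of "traces" `B → β`, so two distinct points `x ≠ x'` have the same trace: every `h ∈ B` takes
the same value at both. Against the point function `c_x`, which differs at `x` and `x'`, each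
`h ∈ B` is then right on exactly one of the two points. -/

theorem Finset.exists_ne_forall_apply_eq_of_infinite {α β : Type*} [Infinite α] [Finite β]
    (B : Finset (α → β)) : ∃ x x' : α, x ≠ x' ∧ ∀ h ∈ B, h x = h x' := by
  obtain ⟨x, x', hne, htrace⟩ :=
    Finite.exists_ne_map_eq_of_infinite fun (x : α) (h : B) => (h : α → β) x
  exact ⟨x, x', hne, fun h hh => congrFun htrace ⟨h, hh⟩⟩

/-- For an infinite set X and a finite set B of hypotheses h : X → Bool, there exist
distinct x, x' ∈ X such that every h ∈ B with h(x) = 1 also has h(x') = 1; consequently,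
for the point function c_x and the uniform distribution on {x, x'}, every h ∈ B agrees
with c_x with probability at most 1/2. -/
theorem points_hard_pair {X : Type*} [DecidableEq X] [Infinite X]
    (B : Finset (X → Bool)) :
    ∃ x x' : X, x ≠ x' ∧ (∀ h ∈ B, h x = true → h x' = true) ∧
      ∀ h ∈ B,
        (((if h x = (if x = x then true else false) then (1 : ℝ) else 0) +
          (if h x' = (if x' = x then true else false) then (1 : ℝ) else 0)) / 2) ≤ 1 / 2 := by
  obtain ⟨x, x', hne, hagree⟩ := B.exists_ne_forall_apply_eq_of_infinite
  refine ⟨x, x', hne, fun h hh hx => hagree h hh ▸ hx, fun h hh => ?_⟩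
  rw [if_pos rfl, if_neg hne.symm, ← hagree h hh]
  cases h x <;> norm_num
end

section
/- (Packing argument) Let M : Yⁿ → H be (ε, 0)-differentially private, let D₀ ∈ Yⁿ be a fixed database, and let G₁, G₂, … be pairwise disjoint subsets of H. If for each i there exists a database R_i ∈ Yⁿ with Pr[M(R_i) ∈ G_i] ≥ 1/2, then Pr[M(D₀) ∈ G_i] ≥ (1/2)e^{−εn} for every i. In particular there can be at most 2e^{εn} such sets G_i, so the sequence cannot be infinite. -/
/-!
Changing a database one row at a time costs a factor `e^ε` per row (group privacy), so any two
databases in `Yⁿ` give probabilities within a factor `e^{εn}`; this yields the lower bound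
`(1/2) e^{-εn}` for every `G i`. Since the `G i` are disjoint, these probabilities add up to at
most `1`, so there are at most `2 e^{εn}` of them.
-/

open Finset Real

theorem le_exp_mul_card_of_eqOn_compl {κ Y : Type*} {ε : ℝ} (f : (κ → Y) → ℝ)
    (hf : ∀ D D' : κ → Y, (∃ i, ∀ j, j ≠ i → D j = D' j) → f D ≤ exp ε * f D')
    (s : Finset κ) (D D' : κ → Y) (hDD' : Set.EqOn D D' (↑s)ᶜ) :
    f D ≤ exp (ε * #s) * f D' := by
  classical
  induction s using Finset.induction_on generalizing D' with
  | empty =>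
    have : D = D' := funext fun j => hDD' (by simp)
    simp [this]
  | insert a s ha ih =>
    set D'' := Function.update D' a (D a)
    have hD'' : Set.EqOn D D'' (↑s)ᶜ := by
      intro j hj
      by_cases hja : j = a
      · subst hja; simp [D'']
      · simp only [D'', Function.update_of_ne hja]
        exact hDD' (by simp_all)
    calc f D ≤ exp (ε * #s) * f D'' := ih D'' hD''
      _ ≤ exp (ε * #s) * (exp ε * f D') := by
        gcongr
        exact hf D'' D' ⟨a, fun j hj => Function.update_of_ne hj _ _⟩
      _ = exp (ε * #(insert a s)) * f D' := by
        rw [card_insert_of_notMem ha, ← mul_assoc, ← exp_add]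
        push_cast
        ring_nf

theorem sum_tsum_subtype_le_tsum {α ι : Type*} {p : α → ℝ} (hp0 : ∀ x, 0 ≤ p x)
    (hp : Summable p) {G : ι → Set α} (hG : Pairwise (Function.onFun Disjoint G))
    (s : Finset ι) : ∑ i ∈ s, ∑' x : G i, p x ≤ ∑' x, p x := by
  rw [← Summable.tsum_finset_bUnion_disjoint (hG.set_pairwise _) fun i _ => hp.subtype _]
  exact Summable.tsum_subtype_le p _ hp0 hp

theorem finite_of_pairwise_disjoint_of_le_tsum {α ι : Type*} {p : α → ℝ} (hp0 : ∀ x, 0 ≤ p x)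
    (hp : Summable p) {G : ι → Set α} (hG : Pairwise (Function.onFun Disjoint G))
    {c : ℝ} (hc : 0 < c) (hcG : ∀ i, c ≤ ∑' x : G i, p x) : Finite ι := by
  have hsum : Summable fun i => ∑' x : G i, p x :=
    summable_of_sum_le (fun i => tsum_nonneg fun x => hp0 x)
      (sum_tsum_subtype_le_tsum hp0 hp hG)
  exact Finite.of_summable_const hc (hsum.of_nonneg_of_le (fun _ => hc.le) hcG)

theorem packing_argument_general {Y H ι : Type*} (n : ℕ) (ε : ℝ)
    (M : (Fin n → Y) → H → ℝ)
    (hM0 : ∀ D h, 0 ≤ M D h) (hM1 : ∀ D, HasSum (M D) 1)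
    (hdp : ∀ D D' : Fin n → Y, (∃ i, ∀ j, j ≠ i → D j = D' j) →
      ∀ T : Set H, ∑' h : T, M D h ≤ Real.exp ε * ∑' h : T, M D' h)
    (D0 : Fin n → Y) (G : ι → Set H)
    (hdisj : Pairwise (Function.onFun Disjoint G))
    (hR : ∀ i, ∃ R : Fin n → Y, 1 / 2 ≤ ∑' h : G i, M R h) :
    (∀ i, 1 / 2 * Real.exp (-(ε * n)) ≤ ∑' h : G i, M D0 h) ∧ Finite ι := by
  have hlow : ∀ i, 1 / 2 * exp (-(ε * n)) ≤ ∑' h : G i, M D0 h := by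
    intro i
    obtain ⟨R, hRi⟩ := hR i
    have hgroup := le_exp_mul_card_of_eqOn_compl (fun D => ∑' h : G i, M D h)
      (fun D D' hDD' => hdp D D' hDD' (G i)) univ R D0 (by simp)
    rw [card_univ, Fintype.card_fin] at hgroup
    calc 1 / 2 * exp (-(ε * n))
        ≤ exp (ε * n) * (∑' h : G i, M D0 h) * exp (-(ε * n)) := by
          gcongr; exact hRi.trans hgroup
      _ = ∑' h : G i, M D0 h := by
          rw [mul_comm, ← mul_assoc, ← exp_add, neg_add_cancel, exp_zero, one_mul]
  exact ⟨hlow, finite_of_pairwise_disjoint_of_le_tsum (hM0 D0) (hM1 D0).summable hdisj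
    (by positivity) hlow⟩

/-- Packing argument: if M : Yⁿ → H is (ε,0)-DP, D₀ is a fixed database, the sets G_i ⊆ H
are pairwise disjoint, and for each i some database R_i has Pr[M(R_i) ∈ G_i] ≥ 1/2, then
Pr[M(D₀) ∈ G_i] ≥ (1/2)e^{−εn} for every i; in particular the index family is finite. -/
theorem packing_argument {Y H ι : Type*} (n : ℕ) (ε : ℝ) (hε : 0 ≤ ε)
    (M : (Fin n → Y) → H → ℝ)
    (hM0 : ∀ D h, 0 ≤ M D h) (hM1 : ∀ D, HasSum (M D) 1)
    (hdp : ∀ D D' : Fin n → Y, (∃ i, ∀ j, j ≠ i → D j = D' j) →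
      ∀ T : Set H, ∑' h : T, M D h ≤ Real.exp ε * ∑' h : T, M D' h)
    (D0 : Fin n → Y) (G : ι → Set H)
    (hdisj : Pairwise (Function.onFun Disjoint G))
    (hR : ∀ i, ∃ R : Fin n → Y, 1 / 2 ≤ ∑' h : G i, M R h) :
    (∀ i, 1 / 2 * Real.exp (-(ε * n)) ≤ ∑' h : G i, M D0 h) ∧ Finite ι :=
  packing_argument_general n ε M hM0 hM1 hdp D0 G hdisj hR
end

section
/- (DP lower bound from fingerprinting codes) Let ε ≤ 1, δ ≤ 1/(12n), γ ≤ 1/2, ξ ≤ 1/(33n). Suppose (Gen, Trace) is an interior point fingerprinting code for n users over X with completeness error γ and soundness error ξ. Then there is no (ε, δ)-differentially private algorithm A : X^{n−1} → X that solves the interior point problem on databases of size n−1 with success probability at least 2/3. -/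
/-!
Run the private algorithm as a pirate on the first `n - 1` codewords. By success and completeness
it outputs a traceable point with probability at least `2/3 - γ`, so some user `i` is traced
with probability at least `(2/3 - γ)/n`. Replacing the `i`-th row of the database by the
unused last codeword changes one entry, so by privacy the new output still traces `i` with
probability at least `e^{-ε}((2/3 - γ)/n - δ)`; but that database is computed from the
coalition of all users except `i`, and soundness bounds this probability by `ξ`. The
parameter constraints make these incompatible.
-/

open Finset Function

section Privacy

variable {ι X Y : Type*}

def Neighbors (D D' : ι → X) : Prop :=
  ∃ i, ∀ j, j ≠ i → D j = D' j

def DifferentiallyPrivate [Fintype Y] (ε δ : ℝ) (M : (ι → X) → Y → ℝ) : Prop :=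
  ∀ D D', Neighbors D D' → ∀ T : Finset Y, ∑ y ∈ T, M D y ≤ Real.exp ε * ∑ y ∈ T, M D' y + δ

theorem neighbors_comp_update [Nonempty ι] {κ : Type*} [DecidableEq κ] {e : ι → κ}
    (he : Injective e) (c : κ → X) (i : κ) (v : X) :
    Neighbors (c ∘ e) (update c i v ∘ e) := by
  by_cases hi : ∃ j, e j = i
  · obtain ⟨j₀, rfl⟩ := hi
    exact ⟨j₀, fun j hj => by simp [update_of_ne (he.ne hj)]⟩
  · push Not at hi
    exact ⟨Classical.arbitrary ι, fun j _ => by simp [update_of_ne (hi j)]⟩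

end Privacy

section Averaging

variable {Ω : Type*} [Fintype Ω] {ρ : Ω → ℝ}

theorem le_sum_mul_of_mem_stdSimplex (hρ : ρ ∈ stdSimplex ℝ Ω) {b : ℝ} {f : Ω → ℝ}
    (h : ∀ p, b ≤ f p) : b ≤ ∑ p, ρ p * f p :=
  calc b = ∑ p, ρ p * b := by rw [← sum_mul, hρ.2, one_mul]
    _ ≤ ∑ p, ρ p * f p := sum_le_sum fun p _ => mul_le_mul_of_nonneg_left (h p) (hρ.1 p)

theorem sum_mul_le_mul_sum_mul_add_of_mem_stdSimplex (hρ : ρ ∈ stdSimplex ℝ Ω) {a δ : ℝ}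
    {f g : Ω → ℝ} (h : ∀ p, f p ≤ a * g p + δ) :
    ∑ p, ρ p * f p ≤ a * ∑ p, ρ p * g p + δ :=
  calc ∑ p, ρ p * f p ≤ ∑ p, ρ p * (a * g p + δ) :=
        sum_le_sum fun p _ => mul_le_mul_of_nonneg_left (h p) (hρ.1 p)
    _ = ∑ p, a * (ρ p * g p) + (∑ p, ρ p) * δ := by
        simp only [mul_add, sum_add_distrib, sum_mul]
        exact congrArg₂ _ (sum_congr rfl fun p _ => by ring) rfl
    _ = a * ∑ p, ρ p * g p + δ := by rw [← mul_sum, hρ.2, one_mul]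

end Averaging

section TwoStage

variable {Ω X : Type*} [Fintype Ω] [Fintype X]

/-- The probability of the event `s p x` when `p ∼ ρ` and then `x ∼ M p`. -/
def twoStageProb (ρ : Ω → ℝ) (M : Ω → X → ℝ) (s : Ω → X → Prop) [∀ p x, Decidable (s p x)] :
    ℝ :=
  ∑ p, ρ p * ∑ x, M p x * if s p x then 1 else 0

variable {ρ : Ω → ℝ} {M M' : Ω → X → ℝ}

theorem twoStageProb_mono (hρ : ∀ p, 0 ≤ ρ p) (hM : ∀ p x, 0 ≤ M p x)
    {s s' : Ω → X → Prop} [∀ p x, Decidable (s p x)] [∀ p x, Decidable (s' p x)]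
    (h : ∀ p x, s p x → s' p x) : twoStageProb ρ M s ≤ twoStageProb ρ M s' := by
  refine sum_le_sum fun p _ => mul_le_mul_of_nonneg_left (sum_le_sum fun x _ => ?_) (hρ p)
  refine mul_le_mul_of_nonneg_left ?_ (hM p x)
  split_ifs with h₁ h₂ <;> first | exact absurd (h p x h₁) h₂ | norm_num

theorem twoStageProb_le_of_forall_sum_le (hρ : ρ ∈ stdSimplex ℝ Ω) {a δ : ℝ}
    (h : ∀ p (T : Finset X), ∑ x ∈ T, M p x ≤ a * ∑ x ∈ T, M' p x + δ)
    (s : Ω → X → Prop) [∀ p x, Decidable (s p x)] :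
    twoStageProb ρ M s ≤ a * twoStageProb ρ M' s + δ := by
  refine sum_mul_le_mul_sum_mul_add_of_mem_stdSimplex hρ fun p => ?_
  simpa only [mul_boole, ← sum_filter] using h p (univ.filter (s p))

theorem twoStageProb_le_add_sum {κ : Type*} [Fintype κ] [DecidableEq κ]
    (hρ : ∀ p, 0 ≤ ρ p) (hM : ∀ p x, 0 ≤ M p x) (t : Ω → X → Option κ)
    (s : Ω → X → Prop) [∀ p x, Decidable (s p x)] :
    twoStageProb ρ M s ≤
      twoStageProb ρ M (fun p x => t p x = none ∧ s p x) +
        ∑ i, twoStageProb ρ M (fun p x => t p x = some i) := by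
  have hsum : ∑ i, twoStageProb ρ M (fun p x => t p x = some i) =
      ∑ p, ρ p * ∑ x, M p x * ∑ i : κ, if t p x = some i then (1 : ℝ) else 0 := by
    simp only [twoStageProb, mul_sum]
    rw [sum_comm]
    exact sum_congr rfl fun p _ => by rw [sum_comm]
  rw [hsum, twoStageProb, twoStageProb, ← sum_add_distrib]
  refine sum_le_sum fun p _ => ?_
  rw [← mul_add, ← sum_add_distrib]
  refine mul_le_mul_of_nonneg_left (sum_le_sum fun x _ => ?_) (hρ p)
  rw [← mul_add]
  refine mul_le_mul_of_nonneg_left ?_ (hM p x)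
  rcases t p x with _ | i <;> split_ifs <;> simp_all

end TwoStage

section Tracing

variable {ι κ X : Type*} [Fintype κ] [DecidableEq κ] [Fintype X]
  {ρ : (κ → X) × (X → Option κ) → ℝ}

theorem twoStageProb_le_of_dependsOn [DecidableEq X] [Nonempty X] {T : Finset κ} {s : _ → X → Prop}
    [∀ p x, Decidable (s p x)] {ξ : ℝ}
    (hsound : ∀ A : ({k // k ∈ T} → X) → X → ℝ, (∀ r, A r ∈ stdSimplex ℝ X) →
      twoStageProb ρ (fun p => A fun k => p.1 k) s ≤ ξ)
    {F : (κ → X) → X → ℝ} (hF : ∀ c, F c ∈ stdSimplex ℝ X) (hFT : DependsOn F (T : Set κ)) :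
    twoStageProb ρ (fun p => F p.1) s ≤ ξ := by
  obtain ⟨A, rfl⟩ := dependsOn_iff_exists_comp.mp hFT
  refine hsound A fun r => ?_
  obtain ⟨c, rfl⟩ : ∃ c : κ → X, (T : Set κ).domRestrict c = r :=
    ⟨fun k => if h : k ∈ T then r ⟨k, h⟩ else Classical.arbitrary X, funext fun k => dif_pos k.2⟩
  exact hF c

theorem twoStageProb_trace_eq_some_le [DecidableEq X] [Nonempty ι] {e : ι → κ} (he : Injective e)
    {i₀ : κ} (hi₀ : i₀ ∉ Set.range e) (hρ : ρ ∈ stdSimplex ℝ _) {ε δ ξ : ℝ} {M : (ι → X) → X → ℝ}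
    (hM : ∀ D, M D ∈ stdSimplex ℝ X) (hdp : DifferentiallyPrivate ε δ M) (i : κ)
    {s : (κ → X) × (X → Option κ) → X → Prop} [∀ p x, Decidable (s p x)]
    (hs : ∀ p x, p.2 x = some i → s p x)
    (hsound : ∀ A : ({k // k ∈ univ.erase i} → X) → X → ℝ, (∀ r, A r ∈ stdSimplex ℝ X) →
      twoStageProb ρ (fun p => A fun k => p.1 k) s ≤ ξ) :
    twoStageProb ρ (fun p => M (p.1 ∘ e)) (fun p x => p.2 x = some i) ≤ Real.exp ε * ξ + δ := by
  obtain ⟨p₀, -⟩ := nonempty_of_sum_ne_zero (hρ.2.trans_ne one_ne_zero)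
  have : Nonempty X := ⟨p₀.1 i⟩
  -- the database of the first codewords with the row of user `i` overwritten by codeword `i₀`
  have hFT : DependsOn (fun c => M (update c i (c i₀) ∘ e)) (univ.erase i : Set κ) := by
    intro c c' hcc'
    simp only [coe_erase, coe_univ, Set.mem_sdiff, Set.mem_univ, Set.mem_singleton_iff,
      true_and] at hcc'
    refine congrArg M (funext fun j => ?_)
    by_cases hj : e j = i
    · simp only [comp_apply, hj, update_self]
      exact hcc' i₀ fun h => hi₀ ⟨j, hj.trans h.symm⟩
    · simp only [comp_apply, update_of_ne hj]
      exact hcc' (e j) hj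
  have hF : twoStageProb ρ (fun p => M (update p.1 i (p.1 i₀) ∘ e))
      (fun p x => p.2 x = some i) ≤ ξ :=
    (twoStageProb_mono hρ.1 (fun p => (hM _).1) hs).trans
      (twoStageProb_le_of_dependsOn hsound (fun c => hM _) hFT)
  calc _ ≤ Real.exp ε * twoStageProb ρ (fun p => M (update p.1 i (p.1 i₀) ∘ e))
          (fun p x => p.2 x = some i) + δ :=
        twoStageProb_le_of_forall_sum_le hρ
          (fun p => hdp _ _ (neighbors_comp_update he p.1 i (p.1 i₀))) _
    _ ≤ Real.exp ε * ξ + δ := by gcongr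

theorem sub_le_sum_twoStageProb_trace_eq_some [LinearOrder X] [Fintype ι] (e : ι → κ)
    (hι : (univ : Finset ι).Nonempty) (hκ : (univ : Finset κ).Nonempty)
    (hρ : ρ ∈ stdSimplex ℝ _) {β γ : ℝ} {M : (ι → X) → X → ℝ} (hM : ∀ D, M D ∈ stdSimplex ℝ X)
    (hsucc : ∀ D, β ≤ ∑ x, M D x *
      if univ.inf' hι D ≤ x ∧ x ≤ univ.sup' hι D then (1 : ℝ) else 0)
    (hcomplete : ∀ A : ({k // k ∈ (univ : Finset κ)} → X) → X → ℝ,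
      (∀ r, A r ∈ stdSimplex ℝ X) →
      twoStageProb ρ (fun p => A fun k => p.1 k)
        (fun p x => p.2 x = none ∧ univ.inf' hκ p.1 ≤ x ∧ x ≤ univ.sup' hκ p.1) ≤ γ) :
    β - γ ≤ ∑ i, twoStageProb ρ (fun p => M (p.1 ∘ e)) (fun p x => p.2 x = some i) := by
  have hsub : ∀ c : κ → X,
      univ.inf' hκ c ≤ univ.inf' hι (c ∘ e) ∧ univ.sup' hι (c ∘ e) ≤ univ.sup' hκ c :=
    fun c => ⟨le_inf' _ _ fun j _ => inf'_le _ (mem_univ (e j)),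
      sup'_le _ _ fun j _ => le_sup' _ (mem_univ (e j))⟩
  have hM0 : ∀ (p : (κ → X) × (X → Option κ)) x, 0 ≤ M (p.1 ∘ e) x := fun p => (hM _).1
  have hnone : twoStageProb ρ (fun p => M (p.1 ∘ e))
      (fun p x => p.2 x = none ∧ univ.inf' hκ p.1 ≤ x ∧ x ≤ univ.sup' hκ p.1) ≤ γ :=
    hcomplete (fun r => M fun j => r ⟨e j, mem_univ _⟩) fun _ => hM _
  have := calc
    β ≤ twoStageProb ρ (fun p => M (p.1 ∘ e))
          (fun p x => univ.inf' hι (p.1 ∘ e) ≤ x ∧ x ≤ univ.sup' hι (p.1 ∘ e)) :=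
        le_sum_mul_of_mem_stdSimplex hρ fun p => hsucc _
    _ ≤ twoStageProb ρ (fun p => M (p.1 ∘ e))
          (fun p x => univ.inf' hκ p.1 ≤ x ∧ x ≤ univ.sup' hκ p.1) :=
        twoStageProb_mono hρ.1 hM0 fun p x hx =>
          ⟨(hsub p.1).1.trans hx.1, hx.2.trans (hsub p.1).2⟩
    _ ≤ _ := twoStageProb_le_add_sum hρ.1 hM0 (fun p => p.2) _
  linarith

end Tracing

theorem mul_exp_mul_add_lt_two_thirds_sub {n : ℕ} (hn : 0 < n) {ε δ γ ξ : ℝ} (hε : ε ≤ 1)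
    (hδ : δ ≤ 1 / (12 * n)) (hγ : γ ≤ 1 / 2) (hξ0 : 0 ≤ ξ) (hξ : ξ ≤ 1 / (33 * n)) :
    n * (Real.exp ε * ξ + δ) < 2 / 3 - γ := by
  have hn' : (0 : ℝ) < n := by exact_mod_cast hn
  have hnξ : n * ξ ≤ 1 / 33 := by
    calc n * ξ ≤ n * (1 / (33 * n)) := by gcongr
      _ = 1 / 33 := by field_simp
  have hnδ : n * δ ≤ 1 / 12 := by
    calc n * δ ≤ n * (1 / (12 * n)) := by gcongr
      _ = 1 / 12 := by field_simp
  have hexp : Real.exp ε < 2.7182818286 :=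
    (Real.exp_le_exp.mpr hε).trans_lt Real.exp_one_lt_d9
  nlinarith [mul_le_mul_of_nonneg_left hexp.le (mul_nonneg hn'.le hξ0)]

/-- DP lower bound from interior point fingerprinting codes. Suppose ε ≤ 1, δ ≤ 1/(12n),
γ ≤ 1/2, ξ ≤ 1/(33n), and (Gen, Trace) is an interior point fingerprinting code for n users
over X with completeness error γ and soundness error ξ — modeled by a joint distribution ρ
over pairs (codebook, trace function). Then there is no (ε, δ)-differentially private
algorithm A : X^{n−1} → X that solves the interior point problem on databases of size n−1
with success probability at least 2/3. -/
theorem dp_lower_bound_from_fpc {X : Type*} [Fintype X] [LinearOrder X]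
    (n : ℕ) (hn : 2 ≤ n) (ε δ γ ξ : ℝ)
    (hε : ε ≤ 1) (hδ : δ ≤ 1 / (12 * n))
    (hγ : γ ≤ 1 / 2) (hξ0 : 0 ≤ ξ) (hξ : ξ ≤ 1 / (33 * n))
    (ρ : (Fin n → X) × (X → Option (Fin n)) → ℝ)
    (hρ0 : ∀ p, 0 ≤ ρ p) (hρ1 : ∑ p, ρ p = 1)
    (complete : ∀ (T : Finset (Fin n)) (hT : T.Nonempty)
      (A : ({i // i ∈ T} → X) → X → ℝ),
      (∀ c, (∀ x, 0 ≤ A c x) ∧ ∑ x, A c x = 1) →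
      ∑ p : (Fin n → X) × (X → Option (Fin n)), ρ p *
        ∑ x, A (fun i => p.1 i.1) x *
          (if p.2 x = none ∧ T.inf' hT p.1 ≤ x ∧ x ≤ T.sup' hT p.1 then (1 : ℝ) else 0) ≤ γ)
    (sound : ∀ (T : Finset (Fin n)) (hT : T.Nonempty)
      (A : ({i // i ∈ T} → X) → X → ℝ),
      (∀ c, (∀ x, 0 ≤ A c x) ∧ ∑ x, A c x = 1) →
      ∑ p : (Fin n → X) × (X → Option (Fin n)), ρ p *
        ∑ x, A (fun i => p.1 i.1) x *
          (if ∃ i, p.2 x = some i ∧ i ∉ T then (1 : ℝ) else 0) ≤ ξ) :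
    ¬ ∃ Adp : (Fin (n - 1) → X) → X → ℝ,
      (∀ D, (∀ x, 0 ≤ Adp D x) ∧ ∑ x, Adp D x = 1) ∧
      (∀ D D' : Fin (n - 1) → X, (∃ i, ∀ j, j ≠ i → D j = D' j) →
        ∀ T : Finset X, ∑ x ∈ T, Adp D x ≤ Real.exp ε * ∑ x ∈ T, Adp D' x + δ) ∧
      (∀ D : Fin (n - 1) → X, 2 / 3 ≤ ∑ x, Adp D x *
        (if Finset.univ.inf' (⟨⟨0, by omega⟩, Finset.mem_univ _⟩ : (Finset.univ : Finset (Fin (n - 1))).Nonempty) D ≤ x ∧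
            x ≤ Finset.univ.sup' (⟨⟨0, by omega⟩, Finset.mem_univ _⟩ : (Finset.univ : Finset (Fin (n - 1))).Nonempty) D
          then (1 : ℝ) else 0)) := by
  rintro ⟨Adp, hAdp, hdp, hsucc⟩
  have hρ : ρ ∈ stdSimplex ℝ _ := ⟨hρ0, hρ1⟩
  have : Nonempty (Fin (n - 1)) := ⟨⟨0, by omega⟩⟩
  have hlast : (⟨n - 1, by omega⟩ : Fin n) ∉ Set.range (Fin.castLE (Nat.sub_le n 1)) := by
    rintro ⟨j, hj⟩
    exact absurd (congrArg Fin.val hj) (by simp; omega)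
  have htrace := fun i => twoStageProb_trace_eq_some_le (Fin.castLE_injective _) hlast hρ hAdp
    hdp i (fun p x h => ⟨i, h, by simp⟩) (sound (Finset.univ.erase i)
      (Finset.univ_nontrivial_iff.mpr (Fin.nontrivial_iff_two_le.mpr hn)).erase_nonempty)
  have hsum := sub_le_sum_twoStageProb_trace_eq_some (Fin.castLE (Nat.sub_le n 1)) _
    ⟨⟨0, by omega⟩, Finset.mem_univ _⟩ hρ hAdp hsucc (complete _ _)
  have hbound := Finset.sum_le_sum fun i (_ : i ∈ Finset.univ) => htrace i
  rw [Finset.sum_const, Finset.card_univ, Fintype.card_fin, nsmul_eq_mul] at hbound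
  linarith [mul_exp_mul_add_lt_two_thirds_sub (by omega : 0 < n) hε hδ hγ hξ0 hξ]
end
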